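/- Let h : [0,T] → ℝ be nonnegative and absolutely continuous with h(t₀) = 0, and let L ≥ 0 and c ≥ 0 be such that h'(s) ≤ 2L√(h(s)) + c for a.e. s ∈ [t₀, T]. Then √(h(s)) ≤ L(s-t₀)e^{L(s-t₀)} + √(c(s-t₀))·e^{L(s-t₀)} for all s ∈ [t₀,T]. -/

import Mathlib

open MeasureTheory

/-- Gronwall-type estimate: if `h` is nonnegative, absolutely continuous on `[t₀, T]`
(encoded via the fundamental theorem of calculus for a derivative `h'`), `h(t₀) = 0` and
`h'(s) ≤ 2L√(h s) + c` a.e., then `√(h s) ≤ L(s-t₀)e^{L(s-t₀)} + √(c(s-t₀)) e^{L(s-t₀)}`. -/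
theorem gronwall_sqrt (T t₀ L c : ℝ) (hT : 0 < T) (ht₀ : t₀ ∈ Set.Icc 0 T)
    (hL : 0 ≤ L) (hc : 0 ≤ c) (h h' : ℝ → ℝ)
    (hcont : ContinuousOn h (Set.Icc t₀ T))
    (hnn : ∀ s ∈ Set.Icc t₀ T, 0 ≤ h s)
    (h0 : h t₀ = 0)
    (hint : IntegrableOn h' (Set.Icc t₀ T))
    (hFTC : ∀ a ∈ Set.Icc t₀ T, ∀ b ∈ Set.Icc t₀ T, a ≤ b →
      h b - h a = ∫ s in a..b, h' s)
    (hbound : ∀ᵐ s ∂(volume.restrict (Set.Icc t₀ T)),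
      h' s ≤ 2 * L * Real.sqrt (h s) + c) :
    ∀ s ∈ Set.Icc t₀ T,
      Real.sqrt (h s) ≤ L * (s - t₀) * Real.exp (L * (s - t₀)) +
        Real.sqrt (c * (s - t₀)) * Real.exp (L * (s - t₀)) := by

  -- main estimate: for every `δ > 0`, `√(h s) ≤ √(c(s-t₀)+δ) + L(s-t₀)`
  intro s hs
  obtain ⟨hs1, hs2⟩ := hs
  have ht₀T : t₀ ∈ Set.Icc t₀ T := ⟨le_rfl, ht₀.2⟩
  have key : ∀ δ : ℝ, 0 < δ →
      Real.sqrt (h s) ≤ Real.sqrt (c * (s - t₀) + δ) + L * (s - t₀) := by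
    intro δ hδ
    set K : ℝ := Real.sqrt (c * (s - t₀) + δ) with hKdef
    have hcs : 0 ≤ c * (s - t₀) := mul_nonneg hc (by linarith)
    have hK0 : 0 ≤ K := Real.sqrt_nonneg _
    have hK2 : K ^ 2 = c * (s - t₀) + δ := Real.sq_sqrt (by linarith)
    set B : ℝ → ℝ := fun u => (K + L * (u - t₀)) ^ 2 with hBdef
    -- the key integral step
    have star : ∀ r ∈ Set.Icc t₀ s, (∀ u ∈ Set.Icc t₀ r, h u ≤ B u) →
        h r ≤ B r - δ := by
      intro r hr hrP
      have hr1 : t₀ ≤ r := hr.1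
      have hr2 : r ≤ s := hr.2
      have hrT : r ∈ Set.Icc t₀ T := ⟨hr1, hr2.trans hs2⟩
      have hsubT : Set.Icc t₀ r ⊆ Set.Icc t₀ T :=
        Set.Icc_subset_Icc le_rfl (hr2.trans hs2)
      have hEq : h r = ∫ u in t₀..r, h' u := by
        have := hFTC t₀ ht₀T r hrT hr1
        linarith [this]
      have hint1 : IntervalIntegrable h' volume t₀ r := by
        rw [intervalIntegrable_iff_integrableOn_Icc_of_le hr1]
        exact hint.mono_set hsubT
      have hcont2 : ContinuousOn (fun u => 2 * L * Real.sqrt (h u) + c)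
          (Set.Icc t₀ r) := by
        apply ContinuousOn.add _ continuousOn_const
        exact continuousOn_const.mul
          (Real.continuous_sqrt.comp_continuousOn (hcont.mono hsubT))
      have hint2 : IntervalIntegrable (fun u => 2 * L * Real.sqrt (h u) + c)
          volume t₀ r := by
        rw [intervalIntegrable_iff_integrableOn_Icc_of_le hr1]
        exact hcont2.integrableOn_compact isCompact_Icc
      have hint3 : IntervalIntegrable (fun u => 2 * L * (K + L * (u - t₀)) + c)
          volume t₀ r := by
        apply Continuous.intervalIntegrable
        fun_prop
      have step1 : ∫ u in t₀..r, h' u ≤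
          ∫ u in t₀..r, (2 * L * Real.sqrt (h u) + c) := by
        refine intervalIntegral.integral_mono_ae_restrict hr1 hint1 hint2 ?_
        exact ae_restrict_of_ae_restrict_of_subset hsubT hbound
      have step2 : ∫ u in t₀..r, (2 * L * Real.sqrt (h u) + c) ≤
          ∫ u in t₀..r, (2 * L * (K + L * (u - t₀)) + c) := by
        refine intervalIntegral.integral_mono_on hr1 hint2 hint3 ?_
        intro u hu
        have hb : 0 ≤ K + L * (u - t₀) := by
          have : 0 ≤ L * (u - t₀) := mul_nonneg hL (by linarith [hu.1])
          linarith
        have hsq : Real.sqrt (h u) ≤ K + L * (u - t₀) := by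
          calc Real.sqrt (h u) ≤ Real.sqrt ((K + L * (u - t₀)) ^ 2) :=
                Real.sqrt_le_sqrt (hrP u hu)
            _ = K + L * (u - t₀) := by rw [Real.sqrt_sq hb]
        have := mul_le_mul_of_nonneg_left hsq (by linarith : (0:ℝ) ≤ 2 * L)
        linarith
      have step3 : ∫ u in t₀..r, (2 * L * (K + L * (u - t₀)) + c) =
          B r + c * (r - t₀) - K ^ 2 := by
        have hF : ∀ u ∈ Set.uIcc t₀ r,
            HasDerivAt (fun u => (K + L * (u - t₀)) ^ 2 + c * (u - t₀))
              (2 * L * (K + L * (u - t₀)) + c) u := by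
          intro u _
          have d1 : HasDerivAt (fun u : ℝ => K + L * (u - t₀)) L u := by
            simpa using (((hasDerivAt_id u).sub_const t₀).const_mul L).const_add K
          have d2 : HasDerivAt (fun u : ℝ => (K + L * (u - t₀)) ^ 2)
              (2 * (K + L * (u - t₀)) * L) u := by
            simpa using d1.fun_pow 2
          have d3 : HasDerivAt (fun u : ℝ => c * (u - t₀)) c u := by
            simpa using ((hasDerivAt_id u).sub_const t₀).const_mul c
          have := d2.fun_add d3
          refine this.congr_deriv ?_
          ring
        rw [intervalIntegral.integral_eq_sub_of_hasDerivAt hF hint3]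
        simp only [hBdef]
        ring
      have hcr : c * (r - t₀) ≤ c * (s - t₀) :=
        mul_le_mul_of_nonneg_left (by linarith) hc
      calc h r = ∫ u in t₀..r, h' u := hEq
        _ ≤ ∫ u in t₀..r, (2 * L * (K + L * (u - t₀)) + c) := step1.trans step2
        _ = B r + c * (r - t₀) - K ^ 2 := step3
        _ ≤ B r - δ := by rw [hK2]; linarith
    -- continuous induction via sSup
    set S : Set ℝ := {r | r ∈ Set.Icc t₀ s ∧ ∀ u ∈ Set.Icc t₀ r, h u ≤ B u}
      with hSdef
    have ht₀S : t₀ ∈ S := by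
      refine ⟨⟨le_rfl, hs1⟩, fun u hu => ?_⟩
      have hu0 : u = t₀ := le_antisymm hu.2 hu.1
      rw [hu0, h0]
      positivity
    have hSne : S.Nonempty := ⟨t₀, ht₀S⟩
    have hSbdd : BddAbove S := ⟨s, fun r hr => hr.1.2⟩
    set R : ℝ := sSup S with hRdef
    have ht₀R : t₀ ≤ R := le_csSup hSbdd ht₀S
    have hRs : R ≤ s := csSup_le hSne fun r hr => hr.1.2
    have hIco : ∀ u ∈ Set.Ico t₀ R, h u ≤ B u := by
      intro u hu
      obtain ⟨r, hrS, hur⟩ := exists_lt_of_lt_csSup hSne hu.2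
      exact hrS.2 u ⟨hu.1, hur.le⟩
    have hRS : R ∈ S := by
      refine ⟨⟨ht₀R, hRs⟩, fun u hu => ?_⟩
      rcases lt_or_eq_of_le hu.2 with h1 | h1
      · exact hIco u ⟨hu.1, h1⟩
      · rcases eq_or_lt_of_le hu.1 with h2 | h2
        · rw [← h2, h0]; positivity
        · -- fun_prop from the left
          have hcg : ContinuousOn (fun u => h u - B u) (Set.Icc t₀ T) := by
            apply hcont.sub
            apply Continuous.continuousOn
            fun_prop
          have huT : u ∈ Set.Icc t₀ T := ⟨hu.1, hu.2.trans (hRs.trans hs2)⟩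
          have hIcoSub : Set.Ico t₀ u ⊆ Set.Icc t₀ T :=
            fun x hx => ⟨hx.1, (hx.2.le.trans (hu.2.trans hRs)).trans hs2⟩
          have htend : Filter.Tendsto (fun u => h u - B u)
              (nhdsWithin u (Set.Ico t₀ u)) (nhds (h u - B u)) :=
            (hcg u huT).mono_left (nhdsWithin_mono u hIcoSub)
          haveI : Filter.NeBot (nhdsWithin u (Set.Ico t₀ u)) :=
            right_nhdsWithin_Ico_neBot h2
          have hle : h u - B u ≤ 0 := by
            refine le_of_tendsto htend ?_
            filter_upwards [self_mem_nhdsWithin] with x hx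
            have := hIco x ⟨hx.1, lt_of_lt_of_le hx.2 hu.2⟩
            linarith
          linarith
    have hReq : R = s := by
      by_contra hne
      have hRlt : R < s := lt_of_le_of_ne hRs hne
      have hgR : h R - B R < 0 := by
        have := star R ⟨ht₀R, hRs⟩ hRS.2
        linarith
      have hcg : ContinuousOn (fun u => h u - B u) (Set.Icc t₀ s) := by
        apply ContinuousOn.sub
        · exact hcont.mono (Set.Icc_subset_Icc le_rfl hs2)
        · apply Continuous.continuousOn; fun_prop
      have hmem : (fun u => h u - B u) ⁻¹' Set.Iio 0 ∈
          nhdsWithin R (Set.Icc t₀ s) := by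
        refine (hcg R ⟨ht₀R, hRs⟩).preimage_mem_nhdsWithin ?_
        exact Iio_mem_nhds hgR
      rw [Metric.mem_nhdsWithin_iff] at hmem
      obtain ⟨ε, hε, hball⟩ := hmem
      set r' : ℝ := min s (R + ε / 2) with hr'def
      have hr'R : R < r' := lt_min hRlt (by linarith)
      have hr's : r' ≤ s := min_le_left _ _
      have hr'S : r' ∈ S := by
        refine ⟨⟨ht₀R.trans hr'R.le, hr's⟩, fun u hu => ?_⟩
        rcases le_or_gt u R with h3 | h3
        · exact hRS.2 u ⟨hu.1, h3⟩
        · have hu2 : u ≤ R + ε / 2 := hu.2.trans (min_le_right _ _)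
          have hdist : dist u R < ε := by
            rw [Real.dist_eq, abs_of_nonneg (by linarith)]
            linarith
          have hmem2 : u ∈ Metric.ball R ε ∩ Set.Icc t₀ s :=
            ⟨hdist, ⟨hu.1, hu.2.trans hr's⟩⟩
          have := hball hmem2
          simp only [Set.mem_preimage, Set.mem_Iio] at this
          linarith
      exact absurd (le_csSup hSbdd hr'S) (not_le.mpr hr'R)
    have hsS : s ∈ S := hReq ▸ hRS
    have hfin : h s ≤ B s := by
      have := star s ⟨hs1, le_rfl⟩ hsS.2
      linarith
    have hb : 0 ≤ K + L * (s - t₀) := by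
      have : 0 ≤ L * (s - t₀) := mul_nonneg hL (by linarith)
      linarith
    calc Real.sqrt (h s) ≤ Real.sqrt ((K + L * (s - t₀)) ^ 2) :=
          Real.sqrt_le_sqrt hfin
      _ = K + L * (s - t₀) := by rw [Real.sqrt_sq hb]
  -- pass to the limit `δ → 0`
  have main : Real.sqrt (h s) ≤ Real.sqrt (c * (s - t₀)) + L * (s - t₀) := by
    have h1 : ∀ ε : ℝ, 0 < ε →
        Real.sqrt (h s) ≤ Real.sqrt (c * (s - t₀)) + L * (s - t₀) + ε := by
      intro ε hε
      have h2 := key (ε ^ 2) (by positivity)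
      have hcs : 0 ≤ c * (s - t₀) := mul_nonneg hc (by linarith)
      have h3 : Real.sqrt (c * (s - t₀) + ε ^ 2) ≤
          Real.sqrt (c * (s - t₀)) + ε := by
        have hb : 0 ≤ Real.sqrt (c * (s - t₀)) + ε := by positivity
        have hsq : c * (s - t₀) + ε ^ 2 ≤ (Real.sqrt (c * (s - t₀)) + ε) ^ 2 := by
          nlinarith [Real.sq_sqrt hcs, Real.sqrt_nonneg (c * (s - t₀))]
        calc Real.sqrt (c * (s - t₀) + ε ^ 2)
            ≤ Real.sqrt ((Real.sqrt (c * (s - t₀)) + ε) ^ 2) :=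
              Real.sqrt_le_sqrt hsq
          _ = Real.sqrt (c * (s - t₀)) + ε := Real.sqrt_sq hb
      linarith
    by_contra hcon
    push_neg at hcon
    have := h1 ((Real.sqrt (h s) - (Real.sqrt (c * (s - t₀)) + L * (s - t₀))) / 2)
      (by linarith)
    linarith
  have hexp : 1 ≤ Real.exp (L * (s - t₀)) :=
    Real.one_le_exp (mul_nonneg hL (by linarith))
  have h4 : 0 ≤ L * (s - t₀) := mul_nonneg hL (by linarith)
  have h5 : 0 ≤ Real.sqrt (c * (s - t₀)) := Real.sqrt_nonneg _
  nlinarith [mul_le_mul_of_nonneg_left hexp h4,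
    mul_le_mul_of_nonneg_left hexp h5]
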